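/- arXiv:1901.03227 — 3 statements merged into one kernel-verified Lean document; each statement's English description precedes it below -/
import Mathlib

section
/- Define h(z,z') = (γ²/(2+γ²))^{d/2} - (γ²/(1+γ²))^{d/2}exp(-‖z‖²/(2(1+γ²))) - (γ²/(1+γ²))^{d/2}exp(-‖z'‖²/(2(1+γ²))) + exp(-‖z-z'‖²/(2γ²)). For Z, Z' independent standard d-variate normals, E[h(Z,Z')²] = (γ²/(2+γ²))^d + (γ²/(4+γ²))^{d/2} - 2(γ⁴/((1+γ²)(3+γ²)))^{d/2}. -/
/-!
Write `h(z, z') = ∑ᵢ cᵢ exp(-(pᵢ‖z‖² + qᵢ‖z'‖² + rᵢ‖z - z'‖²))` with four terms. Then `h²` is a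
double sum of exponentials of the same shape, and for `Z, Z'` independent standard Gaussians on an
`n`-dimensional space, `E[exp(-Q(Z, Z'))] = det(I + 2Q)^(-n/2)` for every such nonnegative
quadratic form `Q`; this is computed by completing the square in `z'` and integrating the two
resulting Gaussians. The sixteen determinants collapse to the three powers of the claimed formula.
-/

open MeasureTheory Real

namespace GaussianQuadratic

theorem sq_sum_mul_exp_neg_quadratic {ι : Type*} [Fintype ι] (c p q r : ι → ℝ) (u v w : ℝ) :
    (∑ i, c i * rexp (-(p i * u + q i * v + r i * w))) ^ 2
      = ∑ i, ∑ j, c i * c j * rexp (-((p i + p j) * u + (q i + q j) * v + (r i + r j) * w)) := by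
  rw [sq, Finset.sum_mul_sum]
  refine Finset.sum_congr rfl fun i _ => Finset.sum_congr rfl fun j _ => ?_
  rw [mul_mul_mul_comm, ← Real.exp_add]
  ring_nf

/-- `det(I + 2Q)` for the form `Q(z, z') = p‖z‖² + q‖z'‖² + r‖z - z'‖²`, whose matrix is
`[[p + r, -r], [-r, q + r]]` (tensored with the identity of the underlying space). -/
def quadDet (p q r : ℝ) : ℝ := (1 + 2 * p) * (1 + 2 * q) + 4 * r * (1 + p + q)

variable {V : Type*} [NormedAddCommGroup V] [InnerProductSpace ℝ V]

theorem quadratic_eq_sq_norm_sub_smul_add {a b c : ℝ} (hbc : b + c ≠ 0) (z z' : V) :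
    a * ‖z‖ ^ 2 + b * ‖z'‖ ^ 2 + c * ‖z - z'‖ ^ 2
      = (b + c) * ‖z' - (c / (b + c)) • z‖ ^ 2 + (a * b + b * c + c * a) / (b + c) * ‖z‖ ^ 2 := by
  rw [norm_sub_sq_real, norm_sub_sq_real, inner_smul_right, norm_smul, mul_pow,
    Real.norm_eq_abs, sq_abs, real_inner_comm z]
  field_simp
  ring

noncomputable def stdGaussianPDF (z : V) : ℝ :=
  (2 * π) ^ (-(Module.finrank ℝ V : ℝ) / 2) * rexp (-‖z‖ ^ 2 / 2)

theorem stdGaussianPDF_mul_stdGaussianPDF_mul_exp (p q r : ℝ) (z z' : V) :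
    stdGaussianPDF z * stdGaussianPDF z' * rexp (-(p * ‖z‖ ^ 2 + q * ‖z'‖ ^ 2 + r * ‖z - z'‖ ^ 2))
      = ((2 * π) ^ (-(Module.finrank ℝ V : ℝ) / 2)) ^ 2 *
          rexp (-((1 / 2 + p) * ‖z‖ ^ 2 + (1 / 2 + q) * ‖z'‖ ^ 2 + r * ‖z - z'‖ ^ 2)) := by
  rw [stdGaussianPDF, stdGaussianPDF, mul_mul_mul_comm, ← sq, mul_assoc, ← Real.exp_add,
    ← Real.exp_add]
  ring_nf

variable [FiniteDimensional ℝ V] [MeasurableSpace V] [BorelSpace V]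

theorem integrable_exp_neg_mul_sq_norm {b : ℝ} (hb : 0 < b) :
    Integrable (fun v : V => rexp (-b * ‖v‖ ^ 2)) :=
  .of_integral_ne_zero <| by
    rw [GaussianFourier.integral_rexp_neg_mul_sq_norm hb]; positivity

theorem integral_exp_neg_quadratic_right {a b c : ℝ} (hbc : 0 < b + c) (z : V) :
    ∫ z' : V, rexp (-(a * ‖z‖ ^ 2 + b * ‖z'‖ ^ 2 + c * ‖z - z'‖ ^ 2))
      = (π / (b + c)) ^ ((Module.finrank ℝ V : ℝ) / 2)
          * rexp (-((a * b + b * c + c * a) / (b + c)) * ‖z‖ ^ 2) := by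
  simp_rw [quadratic_eq_sq_norm_sub_smul_add hbc.ne', neg_add, Real.exp_add, ← neg_mul]
  rw [integral_mul_const, integral_sub_right_eq_self (fun z' => rexp (-(b + c) * ‖z'‖ ^ 2)),
    GaussianFourier.integral_rexp_neg_mul_sq_norm hbc]

theorem integral_integral_exp_neg_quadratic {a b c : ℝ} (hbc : 0 < b + c)
    (hdet : 0 < a * b + b * c + c * a) :
    ∫ z : V, ∫ z' : V, rexp (-(a * ‖z‖ ^ 2 + b * ‖z'‖ ^ 2 + c * ‖z - z'‖ ^ 2))
      = (π ^ 2 / (a * b + b * c + c * a)) ^ ((Module.finrank ℝ V : ℝ) / 2) := by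
  simp_rw [integral_exp_neg_quadratic_right hbc]
  rw [integral_const_mul, GaussianFourier.integral_rexp_neg_mul_sq_norm (by positivity),
    ← mul_rpow (by positivity) (by positivity)]
  congr 1
  field_simp

theorem integrable_exp_neg_quadratic {a b c : ℝ} (hbc : 0 < b + c)
    (hdet : 0 < a * b + b * c + c * a) :
    Integrable (fun x : V × V => rexp (-(a * ‖x.1‖ ^ 2 + b * ‖x.2‖ ^ 2 + c * ‖x.1 - x.2‖ ^ 2)))
      (volume.prod volume) := by
  refine (integrable_prod_iff (by fun_prop)).2 ⟨ae_of_all _ fun z => .of_integral_ne_zero ?_, ?_⟩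
  · rw [integral_exp_neg_quadratic_right hbc]; positivity
  · simp_rw [Real.norm_eq_abs, Real.abs_exp, integral_exp_neg_quadratic_right hbc]
    exact (integrable_exp_neg_mul_sq_norm (by positivity)).const_mul _

theorem integrable_stdGaussianPDF_mul_exp_neg_quadratic {p q r : ℝ} (hp : 0 ≤ p) (hq : 0 ≤ q)
    (hr : 0 ≤ r) :
    Integrable (fun x : V × V => stdGaussianPDF x.1 * stdGaussianPDF x.2 *
      rexp (-(p * ‖x.1‖ ^ 2 + q * ‖x.2‖ ^ 2 + r * ‖x.1 - x.2‖ ^ 2))) (volume.prod volume) := by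
  simp_rw [stdGaussianPDF_mul_stdGaussianPDF_mul_exp]
  exact (integrable_exp_neg_quadratic (by positivity) (by positivity)).const_mul _

theorem integral_integral_stdGaussianPDF_mul_exp_neg_quadratic {p q r : ℝ} (hp : 0 ≤ p)
    (hq : 0 ≤ q) (hr : 0 ≤ r) :
    ∫ z : V, ∫ z' : V, stdGaussianPDF z * stdGaussianPDF z' *
        rexp (-(p * ‖z‖ ^ 2 + q * ‖z'‖ ^ 2 + r * ‖z - z'‖ ^ 2))
      = quadDet p q r ^ (-((Module.finrank ℝ V : ℝ) / 2)) := by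
  simp_rw [stdGaussianPDF_mul_stdGaussianPDF_mul_exp, integral_const_mul]
  have hdet : 0 < quadDet p q r := by unfold quadDet; positivity
  rw [integral_integral_exp_neg_quadratic (by positivity) (by positivity), neg_div,
    rpow_neg (by positivity), rpow_neg hdet.le, ← inv_rpow (by positivity), ← inv_rpow hdet.le, sq,
    ← mul_rpow (by positivity) (by positivity), ← mul_rpow (by positivity) (by positivity)]
  congr 1
  unfold quadDet
  field_simp
  ring

theorem integral_integral_stdGaussianPDF_mul_sq_sum {ι : Type*} [Fintype ι] (c p q r : ι → ℝ)
    (hp : ∀ i, 0 ≤ p i) (hq : ∀ i, 0 ≤ q i) (hr : ∀ i, 0 ≤ r i) :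
    ∫ z : V, ∫ z' : V, stdGaussianPDF z * stdGaussianPDF z' *
        (∑ i, c i * rexp (-(p i * ‖z‖ ^ 2 + q i * ‖z'‖ ^ 2 + r i * ‖z - z'‖ ^ 2))) ^ 2
      = ∑ i, ∑ j, c i * c j *
          quadDet (p i + p j) (q i + q j) (r i + r j) ^ (-((Module.finrank ℝ V : ℝ) / 2)) := by
  have hint i j := integrable_stdGaussianPDF_mul_exp_neg_quadratic (V := V)
    (add_nonneg (hp i) (hp j)) (add_nonneg (hq i) (hq j)) (add_nonneg (hr i) (hr j))
  simp_rw [sq_sum_mul_exp_neg_quadratic, Finset.mul_sum, mul_left_comm (stdGaussianPDF _ * _)]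
  rw [← integral_prod _ (integrable_finsetSum _ fun i _ => integrable_finsetSum _ fun j _ =>
    (hint i j).const_mul _)]
  simp_rw [integral_finsetSum _ fun i _ => integrable_finsetSum _ fun j _ => (hint i j).const_mul _]
  refine Finset.sum_congr rfl fun i _ => ?_
  rw [integral_finsetSum _ fun j _ => (hint i j).const_mul _]
  refine Finset.sum_congr rfl fun j _ => ?_
  rw [integral_const_mul, integral_prod _ (hint i j),
    integral_integral_stdGaussianPDF_mul_exp_neg_quadratic (add_nonneg (hp i) (hp j))
      (add_nonneg (hq i) (hq j)) (add_nonneg (hr i) (hr j))]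

end GaussianQuadratic

open GaussianQuadratic

/- The kernel `h` is `∑ᵢ cᵢ exp(-(pᵢ‖z‖² + qᵢ‖z'‖² + rᵢ‖z - z'‖²))` with `c = mmdCoeff`,
`p = mmdRateFst`, `q = mmdRateSnd`, `r = mmdRateDiff`. -/

noncomputable def mmdCoeff (d : ℕ) (γ : ℝ) : Fin 4 → ℝ :=
  ![(γ ^ 2 / (2 + γ ^ 2)) ^ ((d : ℝ) / 2), -(γ ^ 2 / (1 + γ ^ 2)) ^ ((d : ℝ) / 2),
    -(γ ^ 2 / (1 + γ ^ 2)) ^ ((d : ℝ) / 2), 1]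

noncomputable def mmdRateFst (γ : ℝ) : Fin 4 → ℝ := ![0, (2 * (1 + γ ^ 2))⁻¹, 0, 0]

noncomputable def mmdRateSnd (γ : ℝ) : Fin 4 → ℝ := ![0, 0, (2 * (1 + γ ^ 2))⁻¹, 0]

noncomputable def mmdRateDiff (γ : ℝ) : Fin 4 → ℝ := ![0, 0, 0, (2 * γ ^ 2)⁻¹]

theorem mmd_h_eq_sum (d : ℕ) (γ u v w : ℝ) :
    (γ ^ 2 / (2 + γ ^ 2)) ^ ((d : ℝ) / 2)
        - (γ ^ 2 / (1 + γ ^ 2)) ^ ((d : ℝ) / 2) * rexp (-u / (2 * (1 + γ ^ 2)))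
        - (γ ^ 2 / (1 + γ ^ 2)) ^ ((d : ℝ) / 2) * rexp (-v / (2 * (1 + γ ^ 2)))
        + rexp (-w / (2 * γ ^ 2))
      = ∑ i, mmdCoeff d γ i *
          rexp (-(mmdRateFst γ i * u + mmdRateSnd γ i * v + mmdRateDiff γ i * w)) := by
  simp only [Fin.sum_univ_four, mmdCoeff, mmdRateFst, mmdRateSnd, mmdRateDiff, Matrix.cons_val,
    zero_mul, add_zero, zero_add, neg_zero, exp_zero, mul_one, div_eq_inv_mul, mul_neg]
  ring

theorem sum_sum_mmdCoeff_mul_quadDet_rpow (d : ℕ) {γ : ℝ} (hγ : 0 < γ) :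
    ∑ i, ∑ j, mmdCoeff d γ i * mmdCoeff d γ j *
        quadDet (mmdRateFst γ i + mmdRateFst γ j) (mmdRateSnd γ i + mmdRateSnd γ j)
          (mmdRateDiff γ i + mmdRateDiff γ j) ^ (-((d : ℝ) / 2))
      = (γ ^ 2 / (2 + γ ^ 2)) ^ (d : ℝ) + (γ ^ 2 / (4 + γ ^ 2)) ^ ((d : ℝ) / 2)
          - 2 * (γ ^ 4 / ((1 + γ ^ 2) * (3 + γ ^ 2))) ^ ((d : ℝ) / 2) := by
  simp only [Fin.sum_univ_four, mmdCoeff, mmdRateFst, mmdRateSnd, mmdRateDiff, Matrix.cons_val,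
    add_zero, zero_add]
  set A := (γ ^ 2 / (2 + γ ^ 2)) ^ ((d : ℝ) / 2) with hA
  set B := (γ ^ 2 / (1 + γ ^ 2)) ^ ((d : ℝ) / 2) with hB
  set C := (γ ^ 4 / ((1 + γ ^ 2) * (3 + γ ^ 2))) ^ ((d : ℝ) / 2) with hC
  set D := (γ ^ 2 / (4 + γ ^ 2)) ^ ((d : ℝ) / 2) with hD
  generalize hα : (2 * (1 + γ ^ 2))⁻¹ = α
  generalize hβ : (2 * γ ^ 2)⁻¹ = β
  have hAA : A * A = (γ ^ 2 / (2 + γ ^ 2)) ^ (d : ℝ) := by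
    rw [← rpow_add (by positivity), add_halves]
  obtain ⟨h000, hα00, h0α0, h00β, hαα0, h2α00, h02α0, hα0β, h0αβ, h002β⟩ :
      quadDet 0 0 0 ^ (-((d : ℝ) / 2)) = 1 ∧
      B * quadDet α 0 0 ^ (-((d : ℝ) / 2)) = A ∧ B * quadDet 0 α 0 ^ (-((d : ℝ) / 2)) = A ∧
      quadDet 0 0 β ^ (-((d : ℝ) / 2)) = A ∧ B * B * quadDet α α 0 ^ (-((d : ℝ) / 2)) = A * A ∧
      B * B * quadDet (α + α) 0 0 ^ (-((d : ℝ) / 2)) = C ∧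
      B * B * quadDet 0 (α + α) 0 ^ (-((d : ℝ) / 2)) = C ∧
      B * quadDet α 0 β ^ (-((d : ℝ) / 2)) = C ∧ B * quadDet 0 α β ^ (-((d : ℝ) / 2)) = C ∧
      quadDet 0 0 (β + β) ^ (-((d : ℝ) / 2)) = D := by
    subst hα hβ
    refine ⟨by simp [quadDet], ?_, ?_, ?_, ?_, ?_, ?_, ?_, ?_, ?_⟩ <;>
      simp (disch := positivity) only [hA, hB, hC, hD, quadDet, rpow_neg, ← inv_rpow,
        ← mul_rpow] <;>
      congr 1 <;> field_simp <;> ring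
  linear_combination (A * A) * h000 - 2 * A * hα00 - 2 * A * h0α0 + 2 * A * h00β + h2α00 + h02α0
    + 2 * hαα0 - 2 * hα0β - 2 * h0αβ + h002β + hAA

theorem mmd_h_second_moment_general (d : ℕ) (γ : ℝ) (hγ : 0 < γ) :
    (∫ z : EuclideanSpace ℝ (Fin d), ∫ z' : EuclideanSpace ℝ (Fin d),
        ((2 * π) ^ (-(d : ℝ) / 2) * Real.exp (-‖z‖ ^ 2 / 2)) *
        ((2 * π) ^ (-(d : ℝ) / 2) * Real.exp (-‖z'‖ ^ 2 / 2)) *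
        ((γ ^ 2 / (2 + γ ^ 2)) ^ ((d : ℝ) / 2)
          - (γ ^ 2 / (1 + γ ^ 2)) ^ ((d : ℝ) / 2) * Real.exp (-‖z‖ ^ 2 / (2 * (1 + γ ^ 2)))
          - (γ ^ 2 / (1 + γ ^ 2)) ^ ((d : ℝ) / 2) * Real.exp (-‖z'‖ ^ 2 / (2 * (1 + γ ^ 2)))
          + Real.exp (-‖z - z'‖ ^ 2 / (2 * γ ^ 2))) ^ 2)
      = (γ ^ 2 / (2 + γ ^ 2)) ^ (d : ℝ) + (γ ^ 2 / (4 + γ ^ 2)) ^ ((d : ℝ) / 2)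
          - 2 * (γ ^ 4 / ((1 + γ ^ 2) * (3 + γ ^ 2))) ^ ((d : ℝ) / 2) := by
  have hpdf (z : EuclideanSpace ℝ (Fin d)) :
      (2 * π) ^ (-(d : ℝ) / 2) * rexp (-‖z‖ ^ 2 / 2) = stdGaussianPDF z := by
    simp [stdGaussianPDF]
  simp_rw [hpdf, mmd_h_eq_sum]
  rw [integral_integral_stdGaussianPDF_mul_sq_sum _ _ _ _
      (by simp [Fin.forall_fin_succ, mmdRateFst]; positivity)
      (by simp [Fin.forall_fin_succ, mmdRateSnd]; positivity)
      (by simp [Fin.forall_fin_succ, mmdRateDiff]; positivity),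
    finrank_euclideanSpace_fin, sum_sum_mmdCoeff_mul_quadDet_rpow d hγ]

/-- Second moment of the `h`-kernel of the unbiased MMD estimator under the null:
`E[h(Z,Z')²] = (γ²/(2+γ²))^d + (γ²/(4+γ²))^{d/2} - 2(γ⁴/((1+γ²)(3+γ²)))^{d/2}`. -/
theorem mmd_h_second_moment (d : ℕ) (hd : 1 ≤ d) (γ : ℝ) (hγ : 0 < γ) :
    (∫ z : EuclideanSpace ℝ (Fin d), ∫ z' : EuclideanSpace ℝ (Fin d),
        ((2 * π) ^ (-(d : ℝ) / 2) * Real.exp (-‖z‖ ^ 2 / 2)) *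
        ((2 * π) ^ (-(d : ℝ) / 2) * Real.exp (-‖z'‖ ^ 2 / 2)) *
        ((γ ^ 2 / (2 + γ ^ 2)) ^ ((d : ℝ) / 2)
          - (γ ^ 2 / (1 + γ ^ 2)) ^ ((d : ℝ) / 2) * Real.exp (-‖z‖ ^ 2 / (2 * (1 + γ ^ 2)))
          - (γ ^ 2 / (1 + γ ^ 2)) ^ ((d : ℝ) / 2) * Real.exp (-‖z'‖ ^ 2 / (2 * (1 + γ ^ 2)))
          + Real.exp (-‖z - z'‖ ^ 2 / (2 * γ ^ 2))) ^ 2)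
      = (γ ^ 2 / (2 + γ ^ 2)) ^ (d : ℝ) + (γ ^ 2 / (4 + γ ^ 2)) ^ ((d : ℝ) / 2)
          - 2 * (γ ^ 4 / ((1 + γ ^ 2) * (3 + γ ^ 2))) ^ ((d : ℝ) / 2) :=
  mmd_h_second_moment_general d γ hγ
end

section
/- Let Ψ^P(t) = exp(-‖t‖²/2) and Ψ^{Q_n}(t) = (1/n)Σ_{i=1}^n exp(i t·z_j) be the empirical characteristic function of points z_1,...,z_n ∈ ℝ^d. With weight φ_β(t) = (2πβ²)^{-d/2}exp(-‖t‖²/(2β²)), the BHEP statistic W_{n,β} = ∫_{ℝ^d} |Ψ^P(t) - Ψ^{Q_n}(t)|² φ_β(t) dt equals the biased MMD estimator with Gaussian RBF kernel of width γ = 1/β: W_{n,β} = (γ²/(2+γ²))^{d/2} - (2/n)(γ²/(1+γ²))^{d/2}Σ_i exp(-‖z_i‖²/(2(1+γ²))) + (1/n²)Σ_{i,j} exp(-‖z_i-z_j‖²/(2γ²)) where γ = 1/β. -/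
/-!
Expanding the square, `|e^{-‖t‖²/2} - (1/n) ∑ⱼ e^{i⟪t, zⱼ⟫}|²` equals
`e^{-‖t‖²} - (2/n) e^{-‖t‖²/2} ∑ⱼ cos ⟪t, zⱼ⟫ + (1/n²) ∑ⱼ ∑ₖ cos ⟪t, zⱼ - zₖ⟫`, so `W_{n,β}` is a
combination of the integrals `∫ φ_β(t) e^{-c‖t‖²} cos ⟪w, t⟫ dt` with `c ∈ {1, 1/2, 0}`. Each of
them is the real part of a Gaussian Fourier integral and equals
`(γ² / (γ² + 2c))^{d/2} exp (-‖w‖² / (2 (γ² + 2c)))`.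
-/

open MeasureTheory Real
open scoped RealInnerProductSpace

theorem sum_cos_sq_add_sum_sin_sq {ι : Type*} (s : Finset ι) (x : ι → ℝ) :
    (∑ j ∈ s, cos (x j)) ^ 2 + (∑ j ∈ s, sin (x j)) ^ 2 = ∑ j ∈ s, ∑ k ∈ s, cos (x j - x k) := by
  simp only [sq, Finset.sum_mul_sum, ← Finset.sum_add_distrib, cos_sub]

theorem norm_ofReal_sub_mul_sum_cexp_sq {ι : Type*} (s : Finset ι) (a c : ℝ) (x : ι → ℝ) :
    ‖(a : ℂ) - c * ∑ j ∈ s, Complex.exp (Complex.I * x j)‖ ^ 2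
      = a ^ 2 - 2 * a * c * ∑ j ∈ s, cos (x j) + c ^ 2 * ∑ j ∈ s, ∑ k ∈ s, cos (x j - x k) := by
  rw [← sum_cos_sq_add_sum_sin_sq, Complex.sq_norm, Complex.normSq_apply]
  simp only [mul_comm Complex.I, Complex.sub_re, Complex.ofReal_re, Complex.mul_re, Complex.re_sum,
    Complex.exp_ofReal_mul_I_re, Complex.ofReal_im, Complex.im_sum, Complex.exp_ofReal_mul_I_im,
    zero_mul, sub_zero, Complex.sub_im, Complex.mul_im, add_zero, zero_sub, mul_neg, neg_mul,
    neg_neg]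
  ring

section

variable {V : Type*} [NormedAddCommGroup V] [InnerProductSpace ℝ V]

theorem re_cexp_neg_mul_sq_norm_add_I_mul_inner (b : ℝ) (w v : V) :
    (Complex.exp (-(b : ℂ) * ‖v‖ ^ 2 + Complex.I * ⟪w, v⟫)).re
      = rexp (-b * ‖v‖ ^ 2) * cos ⟪w, v⟫ := by
  rw [Complex.exp_re]
  simp [← Complex.ofReal_pow]

noncomputable def gaussianWeight (β : ℝ) (t : V) : ℝ :=
  (2 * π * β ^ 2) ^ (-(Module.finrank ℝ V : ℝ) / 2) * rexp (-‖t‖ ^ 2 / (2 * β ^ 2))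

theorem gaussianWeight_mul_rexp_neg_mul (β c : ℝ) (t : V) (y : ℝ) :
    gaussianWeight β t * (rexp (-c * ‖t‖ ^ 2) * y)
      = (2 * π * β ^ 2) ^ (-(Module.finrank ℝ V : ℝ) / 2) *
          (rexp (-(c + (2 * β ^ 2)⁻¹) * ‖t‖ ^ 2) * y) := by
  rw [gaussianWeight, mul_assoc, ← mul_assoc (rexp _), ← Real.exp_add]
  ring_nf

-- Every term has the shape `gaussianWeight β t * (rexp (-c * ‖t‖ ^ 2) * cos ⟪w, t⟫)` of
-- `integral_gaussianWeight_mul`, hence the spelled-out `-1 *`, `-0 *` and `⟪0, t⟫`.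
theorem norm_sub_sum_cexp_sq_mul_gaussianWeight {ι : Type*} (s : Finset ι) (β c : ℝ)
    (z : ι → V) (t : V) :
    ‖(rexp (-‖t‖ ^ 2 / 2) : ℂ) - c * ∑ j ∈ s, Complex.exp (Complex.I * ⟪t, z j⟫)‖ ^ 2 *
        gaussianWeight β t
      = gaussianWeight β t * (rexp (-1 * ‖t‖ ^ 2) * cos ⟪0, t⟫)
        - 2 * c * ∑ j ∈ s, gaussianWeight β t * (rexp (-(1 / 2) * ‖t‖ ^ 2) * cos ⟪z j, t⟫)
        + c ^ 2 * ∑ j ∈ s, ∑ k ∈ s,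
            gaussianWeight β t * (rexp (-0 * ‖t‖ ^ 2) * cos ⟪z j - z k, t⟫) := by
  have hsq : rexp (-‖t‖ ^ 2 / 2) ^ 2 = rexp (-1 * ‖t‖ ^ 2) := by
    rw [← exp_nat_mul]; ring_nf
  have hhalf : rexp (-(1 / 2) * ‖t‖ ^ 2) = rexp (-‖t‖ ^ 2 / 2) := by ring_nf
  rw [norm_ofReal_sub_mul_sum_cexp_sq]
  simp only [hsq, hhalf, inner_zero_left, cos_zero, neg_zero, zero_mul, exp_zero, one_mul,
    mul_one, inner_sub_left, real_inner_comm _ t, ← Finset.mul_sum]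
  ring

variable [FiniteDimensional ℝ V] [MeasurableSpace V] [BorelSpace V]

theorem integrable_rexp_neg_mul_sq_norm_mul_cos_inner {b : ℝ} (hb : 0 < b) (w : V) :
    Integrable fun v : V => rexp (-b * ‖v‖ ^ 2) * cos ⟪w, v⟫ := by
  simpa only [RCLike.re_to_complex, re_cexp_neg_mul_sq_norm_add_I_mul_inner] using
    (GaussianFourier.integrable_cexp_neg_mul_sq_norm_add (b := b) hb Complex.I w).re

theorem integral_rexp_neg_mul_sq_norm_mul_cos_inner {b : ℝ} (hb : 0 < b) (w : V) :
    ∫ v : V, rexp (-b * ‖v‖ ^ 2) * cos ⟪w, v⟫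
      = (π / b) ^ (Module.finrank ℝ V / 2 : ℝ) * rexp (-‖w‖ ^ 2 / (4 * b)) := by
  have h := integral_re
    (GaussianFourier.integrable_cexp_neg_mul_sq_norm_add (b := b) hb Complex.I w)
  rw [GaussianFourier.integral_cexp_neg_mul_sq_norm_add (b := b) hb Complex.I w] at h
  simp only [RCLike.re_to_complex, re_cexp_neg_mul_sq_norm_add_I_mul_inner] at h
  rw [h, ← Complex.ofReal_div, ← Complex.ofReal_natCast, ← Complex.ofReal_ofNat,
    ← Complex.ofReal_div, ← Complex.ofReal_cpow (by positivity), Complex.I_sq,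
    show -1 * (‖w‖ : ℂ) ^ 2 / (4 * b) = ((-‖w‖ ^ 2 / (4 * b) : ℝ) : ℂ) by push_cast; ring,
    ← Complex.ofReal_exp, ← Complex.ofReal_mul, Complex.ofReal_re]

theorem integrable_gaussianWeight_mul {β c : ℝ} (hβ : 0 < β) (hc : 0 ≤ c) (w : V) :
    Integrable fun t : V => gaussianWeight β t * (rexp (-c * ‖t‖ ^ 2) * cos ⟪w, t⟫) := by
  simp_rw [gaussianWeight_mul_rexp_neg_mul]
  exact (integrable_rexp_neg_mul_sq_norm_mul_cos_inner (by positivity) w).const_mul _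

theorem integral_gaussianWeight_mul {β c : ℝ} (hβ : 0 < β) (hc : 0 ≤ c) (w : V) :
    ∫ t : V, gaussianWeight β t * (rexp (-c * ‖t‖ ^ 2) * cos ⟪w, t⟫)
      = (β⁻¹ ^ 2 / (2 * c + β⁻¹ ^ 2)) ^ (Module.finrank ℝ V / 2 : ℝ) *
          rexp (-‖w‖ ^ 2 / (2 * (2 * c + β⁻¹ ^ 2))) := by
  have hb : 0 < c + (2 * β ^ 2)⁻¹ := by positivity
  simp_rw [gaussianWeight_mul_rexp_neg_mul]
  rw [integral_const_mul, integral_rexp_neg_mul_sq_norm_mul_cos_inner hb, ← mul_assoc, neg_div,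
    rpow_neg (by positivity), ← inv_rpow (by positivity),
    ← mul_rpow (by positivity) (by positivity),
    show (2 * π * β ^ 2)⁻¹ * (π / (c + (2 * β ^ 2)⁻¹)) = β⁻¹ ^ 2 / (2 * c + β⁻¹ ^ 2) by field_simp,
    show 4 * (c + (2 * β ^ 2)⁻¹) = 2 * (2 * c + β⁻¹ ^ 2) by ring]

theorem integral_norm_sub_sum_cexp_sq_mul_gaussianWeight {ι : Type*} (s : Finset ι) {β : ℝ}
    (hβ : 0 < β) (c : ℝ) (z : ι → V) :
    ∫ t : V, ‖(rexp (-‖t‖ ^ 2 / 2) : ℂ) - c * ∑ j ∈ s, Complex.exp (Complex.I * ⟪t, z j⟫)‖ ^ 2 *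
        gaussianWeight β t
      = (β⁻¹ ^ 2 / (2 + β⁻¹ ^ 2)) ^ (Module.finrank ℝ V / 2 : ℝ)
        - 2 * c * (β⁻¹ ^ 2 / (1 + β⁻¹ ^ 2)) ^ (Module.finrank ℝ V / 2 : ℝ) *
            ∑ j ∈ s, rexp (-‖z j‖ ^ 2 / (2 * (1 + β⁻¹ ^ 2)))
        + c ^ 2 * ∑ j ∈ s, ∑ k ∈ s, rexp (-‖z j - z k‖ ^ 2 / (2 * β⁻¹ ^ 2)) := by
  have h1 := integrable_gaussianWeight_mul hβ zero_le_one (0 : V)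
  have h2 := integrable_finsetSum s fun j _ =>
    integrable_gaussianWeight_mul hβ one_half_pos.le (z j)
  have h3 (j : ι) := integrable_finsetSum s fun k _ =>
    integrable_gaussianWeight_mul hβ le_rfl (z j - z k)
  simp_rw [norm_sub_sum_cexp_sq_mul_gaussianWeight]
  rw [integral_add (h1.sub' (h2.const_mul _))
      ((integrable_finsetSum _ fun j _ => h3 j).const_mul _),
    integral_sub h1 (h2.const_mul _), integral_const_mul, integral_const_mul,
    integral_finsetSum _ fun j _ => integrable_gaussianWeight_mul hβ one_half_pos.le (z j),
    integral_finsetSum _ fun j _ => h3 j]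
  simp_rw [integral_finsetSum _ fun k _ => integrable_gaussianWeight_mul hβ le_rfl _,
    integral_gaussianWeight_mul hβ zero_le_one, integral_gaussianWeight_mul hβ one_half_pos.le,
    integral_gaussianWeight_mul hβ le_rfl]
  have hβ' : β⁻¹ ^ 2 ≠ 0 := by positivity
  simp only [mul_one, mul_one_div_cancel (two_ne_zero (α := ℝ)), mul_zero, zero_add,
    div_self hβ', one_rpow, one_mul, norm_zero, zero_pow two_ne_zero, neg_zero, zero_div, exp_zero,
    ← Finset.mul_sum]
  ring

end

theorem bhep_eq_mmd_biased_general (d n : ℕ) (β γ : ℝ) (hβ : 0 < β)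
    (hγ : γ = 1 / β) (z : Fin n → EuclideanSpace ℝ (Fin d)) :
    (∫ t : EuclideanSpace ℝ (Fin d),
        (‖((Real.exp (-‖t‖ ^ 2 / 2) : ℝ)
            - (1 / (n : ℂ)) * ∑ j, Complex.exp (Complex.I * ((inner ℝ t (z j) : ℝ) : ℂ)))‖) ^ 2 *
          ((2 * π * β ^ 2) ^ (-(d : ℝ) / 2) * Real.exp (-‖t‖ ^ 2 / (2 * β ^ 2))))
      = (γ ^ 2 / (2 + γ ^ 2)) ^ ((d : ℝ) / 2)
        - (2 / n) * (γ ^ 2 / (1 + γ ^ 2)) ^ ((d : ℝ) / 2) *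
            ∑ i, Real.exp (-‖z i‖ ^ 2 / (2 * (1 + γ ^ 2)))
        + (1 / (n : ℝ) ^ 2) * ∑ i, ∑ j,
            Real.exp (-‖z i - z j‖ ^ 2 / (2 * γ ^ 2)) := by
  obtain rfl : γ = β⁻¹ := hγ.trans (one_div β)
  have hweight (t : EuclideanSpace ℝ (Fin d)) :
      (2 * π * β ^ 2) ^ (-(d : ℝ) / 2) * rexp (-‖t‖ ^ 2 / (2 * β ^ 2)) = gaussianWeight β t := by
    rw [gaussianWeight, finrank_euclideanSpace_fin]
  have hn : (1 / (n : ℂ)) = ((1 / n : ℝ) : ℂ) := by push_cast; rfl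
  simp_rw [hweight, hn, integral_norm_sub_sum_cexp_sq_mul_gaussianWeight _ hβ,
    finrank_euclideanSpace_fin]
  ring

/-- The BHEP statistic `W_{n,β} = ∫ |Ψ^P(t) - Ψ^{Q_n}(t)|² φ_β(t) dt` equals the
biased Gaussian-RBF MMD estimator with kernel width `γ = 1/β`. -/
theorem bhep_eq_mmd_biased (d n : ℕ) (hd : 1 ≤ d) (hn : 1 ≤ n) (β γ : ℝ) (hβ : 0 < β)
    (hγ : γ = 1 / β) (z : Fin n → EuclideanSpace ℝ (Fin d)) :
    (∫ t : EuclideanSpace ℝ (Fin d),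
        (‖((Real.exp (-‖t‖ ^ 2 / 2) : ℝ)
            - (1 / (n : ℂ)) * ∑ j, Complex.exp (Complex.I * ((inner ℝ t (z j) : ℝ) : ℂ)))‖) ^ 2 *
          ((2 * π * β ^ 2) ^ (-(d : ℝ) / 2) * Real.exp (-‖t‖ ^ 2 / (2 * β ^ 2))))
      = (γ ^ 2 / (2 + γ ^ 2)) ^ ((d : ℝ) / 2)
        - (2 / n) * (γ ^ 2 / (1 + γ ^ 2)) ^ ((d : ℝ) / 2) *
            ∑ i, Real.exp (-‖z i‖ ^ 2 / (2 * (1 + γ ^ 2)))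
        + (1 / (n : ℝ) ^ 2) * ∑ i, ∑ j,
            Real.exp (-‖z i - z j‖ ^ 2 / (2 * γ ^ 2)) :=
  bhep_eq_mmd_biased_general d n β γ hβ hγ z
end

section
/- The variance Var(γ,d,n) = (2/(n(n-1)))[(γ²/(2+γ²))^d + (γ²/(4+γ²))^{d/2} - 2(γ⁴/((1+γ²)(3+γ²)))^{d/2}] is strictly positive for all γ > 0, d ≥ 1, n ≥ 2. -/
/-!
Write `a = γ²/(2+γ²)`, `b = γ²/(4+γ²)`, `z = γ⁴/((1+γ²)(3+γ²))` and `s = d/2`, so that the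
bracket is `(a²)^s + b^s - 2 z^s`. Since `z² < a² b` (with `u = γ²` this reduces to
`u (2+u)² (4+u) < ((1+u)(3+u))²`, whose difference is `2u² + 8u + 9`), AM-GM gives
`2 z^s < 2 √((a²)^s b^s) ≤ (a²)^s + b^s`.
-/

open Real

theorem two_mul_rpow_lt_add_rpow {x y w s : ℝ} (hx : 0 ≤ x) (hy : 0 ≤ y) (hw : 0 ≤ w)
    (h : w ^ 2 < x * y) (hs : 0 < s) : 2 * w ^ s < x ^ s + y ^ s := by
  have hsq : (w ^ s) ^ 2 < x ^ s * y ^ s := by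
    rw [rpow_pow_comm hw, ← mul_rpow hx hy]
    exact rpow_lt_rpow (by positivity) h hs
  have hxs : 0 ≤ x ^ s := rpow_nonneg hx s
  have hys : 0 ≤ y ^ s := rpow_nonneg hy s
  nlinarith [sq_nonneg (x ^ s - y ^ s), rpow_nonneg hw s]

theorem sq_rpow_div_two {x : ℝ} (hx : 0 ≤ x) (t : ℝ) : (x ^ 2) ^ (t / 2) = x ^ t := by
  rw [← rpow_two, ← rpow_mul hx]
  ring_nf

theorem gaussian_cross_term_sq_lt {γ : ℝ} (hγ : γ ≠ 0) :
    (γ ^ 4 / ((1 + γ ^ 2) * (3 + γ ^ 2))) ^ 2 < (γ ^ 2 / (2 + γ ^ 2)) ^ 2 * (γ ^ 2 / (4 + γ ^ 2)) := by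
  rw [div_pow, div_pow, div_mul_div_comm, div_lt_div_iff₀ (by positivity) (by positivity)]
  have hpoly : γ ^ 2 * (2 + γ ^ 2) ^ 2 * (4 + γ ^ 2) < ((1 + γ ^ 2) * (3 + γ ^ 2)) ^ 2 := by
    nlinarith
  calc (γ ^ 4) ^ 2 * ((2 + γ ^ 2) ^ 2 * (4 + γ ^ 2))
      = (γ ^ 2) ^ 3 * (γ ^ 2 * (2 + γ ^ 2) ^ 2 * (4 + γ ^ 2)) := by ring
    _ < (γ ^ 2) ^ 3 * ((1 + γ ^ 2) * (3 + γ ^ 2)) ^ 2 := by gcongr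
    _ = (γ ^ 2) ^ 2 * γ ^ 2 * ((1 + γ ^ 2) * (3 + γ ^ 2)) ^ 2 := by ring

/-- The null variance
`Var(γ,d,n) = (2/(n(n-1)))[(γ²/(2+γ²))^d + (γ²/(4+γ²))^{d/2} - 2(γ⁴/((1+γ²)(3+γ²)))^{d/2}]`
is strictly positive for `γ > 0`, `d ≥ 1`, `n ≥ 2`. -/
theorem mmd_null_variance_pos (γ : ℝ) (hγ : 0 < γ) (d n : ℕ) (hd : 1 ≤ d) (hn : 2 ≤ n) :
    0 < (2 / ((n : ℝ) * ((n : ℝ) - 1))) *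
        ((γ ^ 2 / (2 + γ ^ 2)) ^ (d : ℝ) + (γ ^ 2 / (4 + γ ^ 2)) ^ ((d : ℝ) / 2)
          - 2 * (γ ^ 4 / ((1 + γ ^ 2) * (3 + γ ^ 2))) ^ ((d : ℝ) / 2)) := by
  have hn' : (2 : ℝ) ≤ n := by exact_mod_cast hn
  have hs : (0 : ℝ) < d / 2 := by positivity
  have hamgm := two_mul_rpow_lt_add_rpow (by positivity) (by positivity) (by positivity)
    (gaussian_cross_term_sq_lt hγ.ne') hs
  rw [sq_rpow_div_two (by positivity)] at hamgm
  exact mul_pos (div_pos two_pos (by nlinarith)) (by linarith)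
end
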